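/- arXiv:0907.3275 — 2 statements merged into one kernel-verified Lean document; each statement's English description precedes it below -/
import Mathlib

section
/- For n ≥ 2, define the deletion map D : S_n → S_{n−1} that removes the letter n from the one-line word σ(1)⋯σ(n): if p = σ^{−1}(n), then D(σ)(j) = σ(j) for j < p and D(σ)(j) = σ(j + 1) for p ≤ j ≤ n − 1. Then for every q > 0 the pushforward of the Mallows measure Q_n under D equals the Mallows measure Q_{n−1}. -/
open Finset

/-- The number of inversions of a permutation. -/
def invPerm {n : ℕ} (σ : Equiv.Perm (Fin n)) : ℕ :=
  (Finset.univ.filter (fun p : Fin n × Fin n => p.1 < p.2 ∧ σ p.2 < σ p.1)).card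

/-- The `q`-integer `[m]_q = 1 + q + ⋯ + q^{m-1}`. -/
def qInt (q : ℝ) (m : ℕ) : ℝ := ∑ i ∈ Finset.range m, q ^ i

/-- The `q`-factorial `[n]_q! = [1]_q [2]_q ⋯ [n]_q`. -/
def qFact (q : ℝ) (n : ℕ) : ℝ := ∏ j ∈ Finset.range n, qInt q (j + 1)

/-- The deletion map `D : S_{m+2} → S_{m+1}` removing the largest letter from the one-line
word: if `p` is the position of the largest letter, the resulting word (given here by its
values, as natural numbers) is `D(σ)(j) = σ(j)` for `j < p` and `D(σ)(j) = σ(j+1)` for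
`j ≥ p` (everything `0`-based). -/
def delFun {m : ℕ} (σ : Equiv.Perm (Fin (m + 2))) (j : Fin (m + 1)) : ℕ :=
  if (j : ℕ) < ((σ.symm (Fin.last (m + 1))) : ℕ) then (σ (Fin.castSucc j) : ℕ)
  else (σ j.succ : ℕ)

/-!
Every permutation `σ ∈ S_{n+1}` is obtained from `D σ` by inserting the largest letter back at
its position `p`, so the fibre of `D` over `τ` is `{insertMax τ p | p}`. The inserted letter
forms an inversion exactly with the `n - p` letters after it, so the fibre has weight
`q^{inv τ} (1 + q + ⋯ + q^n) = q^{inv τ} [n+1]_q`, and `[n+1]_q! = [n]_q! [n+1]_q`.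
-/

def insertMax {n : ℕ} (τ : Equiv.Perm (Fin n)) (p : Fin (n + 1)) : Equiv.Perm (Fin (n + 1)) :=
  (finSuccEquiv' p).trans ((Equiv.optionCongr τ).trans (finSuccEquiv' (Fin.last n)).symm)

section insertMax

variable {n : ℕ} (τ : Equiv.Perm (Fin n)) (p : Fin (n + 1))

@[simp]
lemma insertMax_apply_self : insertMax τ p p = Fin.last n := by
  simp [insertMax, finSuccEquiv'_at]

@[simp]
lemma insertMax_apply_succAbove (j : Fin n) :
    insertMax τ p (p.succAbove j) = Fin.castSucc (τ j) := by
  simp [insertMax, finSuccEquiv'_succAbove, ← Fin.succAbove_last]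

@[simp]
lemma insertMax_symm_apply_last : (insertMax τ p).symm (Fin.last n) = p := by
  rw [Equiv.symm_apply_eq, insertMax_apply_self]

lemma insertMax_injective : Function.Injective (insertMax τ) := fun p p' h => by
  rw [← insertMax_symm_apply_last τ p, h, insertMax_symm_apply_last]

end insertMax

lemma delFun_eq_apply_succAbove {m : ℕ} (σ : Equiv.Perm (Fin (m + 2))) (j : Fin (m + 1)) :
    delFun σ j = σ ((σ.symm (Fin.last (m + 1))).succAbove j) := by
  simp only [delFun, Fin.succAbove, Fin.lt_def, Fin.val_castSucc]
  split_ifs <;> rfl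

lemma delFun_eq_iff {m : ℕ} (σ : Equiv.Perm (Fin (m + 2))) (τ : Equiv.Perm (Fin (m + 1))) :
    (∀ j, delFun σ j = (τ j : ℕ)) ↔ insertMax τ (σ.symm (Fin.last (m + 1))) = σ := by
  simp only [delFun_eq_apply_succAbove]
  constructor
  · intro h
    ext x : 1
    induction x using Fin.succAboveCases (σ.symm (Fin.last (m + 1))) with
    | x => simp
    | p j => exact Fin.ext (by simp [h j])
  · intro h j
    rw [← h]
    simp

lemma filter_delFun_eq_image {m : ℕ} (τ : Equiv.Perm (Fin (m + 1))) :
    univ.filter (fun σ : Equiv.Perm (Fin (m + 2)) => ∀ j, delFun σ j = (τ j : ℕ)) =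
      univ.image (insertMax τ) := by
  ext σ
  simp only [delFun_eq_iff, mem_filter, mem_univ, true_and, mem_image]
  constructor
  · exact fun h => ⟨_, h⟩
  · rintro ⟨p, rfl⟩
    simp

def inversions {n : ℕ} (σ : Equiv.Perm (Fin n)) : Finset (Fin n × Fin n) :=
  univ.filter (fun x => x.1 < x.2 ∧ σ x.2 < σ x.1)

lemma invPerm_eq_card_inversions {n : ℕ} (σ : Equiv.Perm (Fin n)) :
    invPerm σ = #(inversions σ) := rfl

section inversions

variable {n : ℕ} (τ : Equiv.Perm (Fin n)) (p : Fin (n + 1))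

lemma filter_inversions_insertMax_avoiding :
    (inversions (insertMax τ p)).filter (fun x => x.1 ≠ p ∧ x.2 ≠ p) =
      (inversions τ).map (p.succAboveEmb.prodMap p.succAboveEmb) := by
  ext ⟨a, b⟩
  induction a using Fin.succAboveCases p <;> induction b using Fin.succAboveCases p <;>
    simp [inversions, Fin.succAbove_ne]

-- The value at `p` is the largest, so the inversions through `p` are the pairs `(p, j)`, `p < j`.
lemma filter_inversions_insertMax_through :
    (inversions (insertMax τ p)).filter (fun x => ¬(x.1 ≠ p ∧ x.2 ≠ p)) =
      (Ioi p).map (Function.Embedding.sectR p _) := by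
  ext ⟨a, b⟩
  induction a using Fin.succAboveCases p <;> induction b using Fin.succAboveCases p <;>
    simp [inversions, Fin.succAbove_ne, Fin.le_last]

end inversions

lemma invPerm_insertMax {n : ℕ} (τ : Equiv.Perm (Fin n)) (p : Fin (n + 1)) :
    invPerm (insertMax τ p) = invPerm τ + (n - p) := by
  rw [invPerm_eq_card_inversions, ← card_filter_add_card_filter_not (fun x => x.1 ≠ p ∧ x.2 ≠ p),
    filter_inversions_insertMax_avoiding, filter_inversions_insertMax_through, card_map, card_map,
    Fin.card_Ioi, invPerm_eq_card_inversions, Nat.add_sub_cancel]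

lemma sum_pow_invPerm_insertMax (q : ℝ) {n : ℕ} (τ : Equiv.Perm (Fin n)) :
    ∑ p, q ^ invPerm (insertMax τ p) = q ^ invPerm τ * qInt q (n + 1) := by
  simp only [invPerm_insertMax, pow_add, ← mul_sum]
  congr 1
  rw [Fin.sum_univ_eq_sum_range (fun i => q ^ (n - i)), qInt]
  exact sum_range_reflect (fun i => q ^ i) (n + 1)

lemma qInt_succ_pos {q : ℝ} (hq : 0 < q) (n : ℕ) : 0 < qInt q (n + 1) :=
  sum_pos (fun i _ => pow_pos hq i) nonempty_range_add_one

/-- the pushforward of the Mallows measure `Q_n` (`n = m + 2 ≥ 2`) under the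
deletion map `D` is the Mallows measure `Q_{n-1}`:  for every `τ ∈ S_{n-1}`,
`∑_{σ : D(σ) = τ} q^{inv σ}/[n]_q! = q^{inv τ}/[n-1]_q!`. -/
theorem stmt_18 (q : ℝ) (hq : 0 < q) (m : ℕ) (τ : Equiv.Perm (Fin (m + 1))) :
    ∑ σ ∈ Finset.univ.filter
        (fun σ : Equiv.Perm (Fin (m + 2)) => ∀ j : Fin (m + 1), delFun σ j = (τ j : ℕ)),
      q ^ invPerm σ / qFact q (m + 2) =
    q ^ invPerm τ / qFact q (m + 1) := by
  rw [filter_delFun_eq_image, sum_image fun _ _ _ _ h => insertMax_injective τ h, ← sum_div,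
    sum_pow_invPerm_insertMax, qFact, prod_range_succ, ← qFact]
  exact mul_div_mul_right _ _ (qInt_succ_pos hq _).ne'
end

section
/- Let v : ℕ → ℝ be weakly increasing, and for a ∈ ℝ let l_a = #{j ∈ ℕ : v_j = a} ∈ ℕ ∪ {∞}. Let u = u_1⋯u_n be a word with letters in the support {v_j : j ∈ ℕ} and let a be a letter of the support; set μ_b(u) = #{m ≤ n : u_m = b} and assume μ_b(u) ≤ l_b for every b. Then P^{(v)}(w_1 = u_1, ..., w_n = u_n, w_{n+1} = a) = P^{(v)}(w_1 = u_1, ..., w_n = u_n) · ( q^{Σ_{b<a} (l_b − μ_b(u))} − q^{Σ_{b≤a} (l_b − μ_b(u))} ), where b runs over the support of v and the convention q^{∞} = 0 is used. -/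
/-!
Given the first `n` letters, the choice `ξ n` is independent of them, since they only depend on
`ξ 0, …, ξ (n - 1)`; it selects the `ξ n`-th position of `v` not used so far. As `v` is
monotone, the unused positions carrying a letter `< a` are an initial segment of the unused
positions, of length `K = #{j | v j < a} - #{m | u m < a}` in `ℕ∞`, and similarly for `≤ a`
with length `L`.
So the next letter is `a` exactly when `K ≤ ξ n < L`, an event of probability `q^K - q^L`.
-/

open MeasureTheory ProbabilityTheory

/-- The first `j` values `σ(0), …, σ(j-1)` of the infinite `q`-shuffle permutation driven by
the (0-indexed) geometric choices `x`. -/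
noncomputable def shufflePrefix (x : ℕ → ℕ) : ℕ → List ℕ
  | 0 => []
  | j + 1 => shufflePrefix x j ++ [Nat.nth (fun m => m ∉ shufflePrefix x j) (x j)]

/-- The random injection `σ : ℕ → ℕ` driving the infinite `q`-shuffle: `σ(j)` is the
`x j`-th smallest (0-indexed) natural number not in `{σ(0), …, σ(j-1)}`. -/
noncomputable def shuffleSeq (x : ℕ → ℕ) (j : ℕ) : ℕ :=
  Nat.nth (fun m => m ∉ shufflePrefix x j) (x j)

/-- `q ^ k` for an extended-natural exponent `k ∈ ℕ ∪ {∞}`, with the convention `q^∞ = 0`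
(valid for `0 < q < 1`). -/
noncomputable def qpowE (q : ℝ) (k : ℕ∞) : ℝ := if k = ⊤ then 0 else q ^ k.toNat

lemma shufflePrefix_eq_map (x : ℕ → ℕ) (n : ℕ) :
    shufflePrefix x n = (List.range n).map (shuffleSeq x) := by
  induction n with
  | zero => rfl
  | succ n ih =>
    rw [show shufflePrefix x (n + 1) = shufflePrefix x n ++ [shuffleSeq x n] from rfl, ih,
      List.range_succ, List.map_append, List.map_singleton]

lemma mem_shufflePrefix {x : ℕ → ℕ} {n k : ℕ} :
    k ∈ shufflePrefix x n ↔ ∃ i < n, shuffleSeq x i = k := by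
  simp [shufflePrefix_eq_map]

lemma shuffleSeq_eq_nth (x : ℕ → ℕ) (n : ℕ) :
    shuffleSeq x n = Nat.nth (· ∉ shufflePrefix x n) (x n) := rfl

lemma shuffleSeq_notMem_shufflePrefix (x : ℕ → ℕ) (j : ℕ) :
    shuffleSeq x j ∉ shufflePrefix x j :=
  Nat.nth_mem_of_infinite (shufflePrefix x j).finite_toSet.infinite_compl (x j)

lemma shuffleSeq_injective (x : ℕ → ℕ) : (shuffleSeq x).Injective := by
  have key {i j : ℕ} (hij : i < j) : shuffleSeq x i ≠ shuffleSeq x j := fun h =>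
    shuffleSeq_notMem_shufflePrefix x j (mem_shufflePrefix.2 ⟨i, hij, h⟩)
  intro i j h
  by_contra hne
  rcases Nat.lt_or_gt_of_ne hne with hij | hji
  exacts [key hij h, key hji h.symm]

lemma dependsOn_shufflePrefix (n : ℕ) :
    DependsOn (shufflePrefix · n) (Finset.range n : Set ℕ) := by
  induction n with
  | zero => exact fun _ _ _ => rfl
  | succ n ih =>
    intro x y hxy
    have hlt : ∀ i ∈ (Finset.range n : Set ℕ), x i = y i := fun i hi =>
      hxy i (by simp at hi ⊢; omega)
    simp only [shufflePrefix, ih hlt, hxy n (by simp)]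

lemma dependsOn_shuffleSeq (j : ℕ) :
    DependsOn (shuffleSeq · j) (Finset.range (j + 1) : Set ℕ) := by
  intro x y hxy
  have hlt : ∀ i ∈ (Finset.range j : Set ℕ), x i = y i := fun i hi =>
    hxy i (by simp at hi ⊢; omega)
  simp only [shuffleSeq_eq_nth, dependsOn_shufflePrefix j hlt, hxy j (by simp)]

lemma Nat.nth_notMem_mem_iff {s : Set ℕ} (hs : IsLowerSet s) {F : Set ℕ} (hF : F.Finite)
    (i : ℕ) : Nat.nth (· ∉ F) i ∈ s ↔ (i : ℕ∞) < (s \ F).encard := by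
  have hinf : (Set.ofPred (· ∉ F)).Infinite := hF.infinite_compl
  rcases hs.eq_univ_or_Iio with rfl | ⟨c, rfl⟩
  · simp [← Set.compl_eq_univ_sdiff, hF.infinite_compl.encard_eq]
  · classical
    have hcount : (Set.Iio c \ F).encard = Nat.count (· ∉ F) c := by
      rw [Nat.count_eq_card_filter_range, ← Set.encard_coe_eq_coe_finsetCard]
      congr 1; ext k; simp
    rw [hcount, Nat.cast_lt, Nat.lt_nth_iff_count_lt hinf, Set.mem_Iio]

section Counting

variable {α : Type*} {v : ℕ → α} {x : ℕ → ℕ} {n : ℕ} {u : Fin n → α}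

lemma encard_inter_shufflePrefix (hxu : ∀ m : Fin n, v (shuffleSeq x m) = u m)
    (p : α → Prop) [DecidablePred p] :
    ({j | p (v j)} ∩ {k | k ∈ shufflePrefix x n}).encard =
      (Finset.univ.filter fun m => p (u m)).card := by
  have himage : {j | p (v j)} ∩ {k | k ∈ shufflePrefix x n} =
      (shuffleSeq x ∘ Fin.val) ''
        ((Finset.univ.filter fun m => p (u m) : Finset (Fin n)) : Set (Fin n)) := by
    ext k
    simp only [Set.mem_inter_iff, Set.mem_ofPred_eq, mem_shufflePrefix, Finset.coe_filter,
      Finset.mem_univ, true_and, Set.mem_image, Function.comp_apply]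
    constructor
    · rintro ⟨hk, i, hi, rfl⟩
      exact ⟨⟨i, hi⟩, by rwa [← hxu], rfl⟩
    · rintro ⟨m, hm, rfl⟩
      exact ⟨by rwa [hxu], m, m.isLt, rfl⟩
  rw [himage, ((shuffleSeq_injective x).comp Fin.val_injective).encard_image,
    Set.encard_coe_eq_coe_finsetCard]

lemma pred_shuffleSeq_iff (hxu : ∀ m : Fin n, v (shuffleSeq x m) = u m)
    (p : α → Prop) [DecidablePred p] (hp : IsLowerSet {j | p (v j)}) :
    p (v (shuffleSeq x n)) ↔
      (x n : ℕ∞) < {j | p (v j)}.encard - (Finset.univ.filter fun m => p (u m)).card := by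
  have hdiff := Set.encard_sdiff_add_encard_inter {j | p (v j)} {k | k ∈ shufflePrefix x n}
  rw [encard_inter_shufflePrefix hxu] at hdiff
  rw [← (ENat.addLECancellable_natCast _).eq_tsub_of_add_eq hdiff]
  exact Nat.nth_notMem_mem_iff hp (shufflePrefix x n).finite_toSet (x n)

lemma shuffleSeq_eq_iff [LinearOrder α] (hv : Monotone v)
    (hxu : ∀ m : Fin n, v (shuffleSeq x m) = u m) (a : α) :
    v (shuffleSeq x n) = a ↔
      {j | v j < a}.encard - (Finset.univ.filter fun m => u m < a).card ≤ x n ∧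
        (x n : ℕ∞) < {j | v j ≤ a}.encard - (Finset.univ.filter fun m => u m ≤ a).card := by
  rw [← not_lt, ← pred_shuffleSeq_iff hxu (· < a) fun _ _ hij hj => (hv hij).trans_lt hj,
    ← pred_shuffleSeq_iff hxu (· ≤ a) fun _ _ hij hj => (hv hij).trans hj]
  exact ⟨fun h => ⟨h.not_lt, h.le⟩, fun ⟨hlt, hle⟩ => le_antisymm hle (not_lt.1 hlt)⟩

end Counting

lemma measurable_of_dependsOn {ι β γ : Type*} [MeasurableSpace β] [Countable β]
    [MeasurableSingletonClass β] [MeasurableSpace γ] [Nonempty γ] {f : (ι → β) → γ}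
    {s : Finset ι} (hf : DependsOn f s) : Measurable f := by
  obtain ⟨g, rfl⟩ := dependsOn_iff_exists_comp.1 hf
  exact (measurable_of_countable g).comp (measurable_pi_lambda _ fun i => measurable_pi_apply _)

lemma ProbabilityTheory.iIndepFun.measure_inter_preimage_eq_mul_of_dependsOn {Ω ι β : Type*}
    [MeasurableSpace Ω] {P : Measure Ω} [MeasurableSpace β] [Countable β]
    [MeasurableSingletonClass β]
    {ξ : ι → Ω → β} (hindep : iIndepFun ξ P) (hmeas : ∀ i, Measurable (ξ i))
    {E : Set (ι → β)} {s : Finset ι} (hE : DependsOn (· ∈ E) s) {k : ι} (hk : k ∉ s)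
    (S : Set β) :
    P ({ω | (fun i => ξ i ω) ∈ E} ∩ ξ k ⁻¹' S) =
      P {ω | (fun i => ξ i ω) ∈ E} * P (ξ k ⁻¹' S) := by
  obtain ⟨g, hg⟩ := dependsOn_iff_exists_comp.1 hE
  have hindep' : IndepFun (fun ω (i : s) => ξ i ω) (ξ k) P := by
    exact (hindep.indepFun_finset s {k} (Finset.disjoint_singleton_right.2 hk) hmeas).comp
      measurable_id (measurable_pi_apply (⟨k, Finset.mem_singleton_self k⟩ : ({k} : Finset ι)))
  have hpre : {ω | (fun i => ξ i ω) ∈ E} = (fun ω (i : s) => ξ i ω) ⁻¹' {t | g t} := by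
    ext ω
    exact Iff.of_eq (congrFun hg _)
  rw [hpre]
  exact hindep'.measure_inter_preimage_eq_mul _ _ (Set.to_countable _).measurableSet
    (Set.to_countable S).measurableSet

lemma qpowE_coe (q : ℝ) (k : ℕ) : qpowE q k = q ^ k := by
  simp [qpowE]

lemma qpowE_top (q : ℝ) : qpowE q ⊤ = 0 := if_pos rfl

lemma qpowE_nonneg {q : ℝ} (hq : 0 ≤ q) (K : ℕ∞) : 0 ≤ qpowE q K := by
  induction K using ENat.recTopCoe with
  | top => rw [qpowE_top]
  | coe k => rw [qpowE_coe]; positivity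

lemma qpowE_antitone {q : ℝ} (hq0 : 0 ≤ q) (hq1 : q ≤ 1) : Antitone (qpowE q) := by
  intro K L hKL
  induction L using ENat.recTopCoe with
  | top => rw [qpowE_top]; exact qpowE_nonneg hq0 K
  | coe l =>
    obtain ⟨k, rfl⟩ :=
      ENat.ne_top_iff_exists.1 (ne_top_of_le_ne_top (ENat.natCast_ne_top l) hKL)
    rw [qpowE_coe, qpowE_coe]
    exact pow_le_pow_of_le_one hq0 hq1 (by exact_mod_cast hKL)

section Geometric

variable {Ω : Type*} [MeasurableSpace Ω] {P : Measure Ω} {q : ℝ} {f : Ω → ℕ}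

lemma measure_lt_of_geometric (hq0 : 0 ≤ q) (hq1 : q ≤ 1) (hf : Measurable f)
    (hgeom : ∀ i : ℕ, P {ω | f ω = i} = ENNReal.ofReal ((1 - q) * q ^ i)) (k : ℕ) :
    P {ω | f ω < k} = ENNReal.ofReal (1 - q ^ k) := by
  have hrange : {ω | f ω < k} = f ⁻¹' ↑(Finset.range k) := by ext; simp
  rw [hrange, ← sum_measure_preimage_singleton _ fun i _ => hf (measurableSet_singleton i)]
  simp only [Set.preimage, Set.mem_singleton_iff, hgeom]
  rw [← ENNReal.ofReal_sum_of_nonneg fun i _ =>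
      mul_nonneg (sub_nonneg.2 hq1) (pow_nonneg hq0 i),
    ← Finset.mul_sum, mul_neg_geom_sum]

lemma measure_ge_of_geometric [IsProbabilityMeasure P] (hq0 : 0 ≤ q) (hq1 : q ≤ 1)
    (hf : Measurable f) (hgeom : ∀ i : ℕ, P {ω | f ω = i} = ENNReal.ofReal ((1 - q) * q ^ i))
    (K : ℕ∞) : P {ω | K ≤ f ω} = ENNReal.ofReal (qpowE q K) := by
  induction K using ENat.recTopCoe with
  | top => simp [qpowE_top]
  | coe k =>
    have hcompl : {ω | (k : ℕ∞) ≤ f ω} = {ω | f ω < k}ᶜ := by ext; simp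
    rw [hcompl, prob_compl_eq_one_sub (measurableSet_lt hf measurable_const),
      measure_lt_of_geometric hq0 hq1 hf hgeom, ← ENNReal.ofReal_one,
      ← ENNReal.ofReal_sub _ (by linarith [pow_le_one₀ hq0 hq1 (n := k)]), qpowE_coe,
      sub_sub_cancel]

lemma measure_window_of_geometric [IsProbabilityMeasure P] (hq0 : 0 ≤ q) (hq1 : q ≤ 1)
    (hf : Measurable f) (hgeom : ∀ i : ℕ, P {ω | f ω = i} = ENNReal.ofReal ((1 - q) * q ^ i))
    (K L : ℕ∞) :
    P {ω | K ≤ f ω ∧ (f ω : ℕ∞) < L} = ENNReal.ofReal (qpowE q K - qpowE q L) := by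
  rcases le_total K L with hKL | hLK
  · have hdiff :
        {ω | K ≤ f ω ∧ (f ω : ℕ∞) < L} = {ω | K ≤ f ω} \ {ω | L ≤ f ω} := by
      ext; simp
    have hmeasL : MeasurableSet {ω | L ≤ f ω} := hf (.of_discrete (s := {i : ℕ | L ≤ i}))
    rw [hdiff, measure_sdiff (Set.ofPred_subset_ofPred.2 fun _ => hKL.trans)
        hmeasL.nullMeasurableSet (measure_ne_top _ _),
      measure_ge_of_geometric hq0 hq1 hf hgeom, measure_ge_of_geometric hq0 hq1 hf hgeom,
      ENNReal.ofReal_sub _ (qpowE_nonneg hq0 L)]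
  · have hempty : {ω | K ≤ f ω ∧ (f ω : ℕ∞) < L} = ∅ := by
      ext ω; simpa using fun h => hLK.trans h
    rw [hempty, measure_empty, eq_comm, ENNReal.ofReal_eq_zero, sub_nonpos]
    exact qpowE_antitone hq0 hq1 hLK

end Geometric

theorem stmt_19_general (q : ℝ) (hq0 : 0 < q) (hq1 : q < 1)
    (Ω : Type*) [MeasurableSpace Ω] (P : Measure Ω) [IsProbabilityMeasure P]
    (ξ : ℕ → Ω → ℕ) (hmeas : ∀ j, Measurable (ξ j))
    (hindep : iIndepFun ξ P)
    (hgeom : ∀ j i : ℕ, P {ω | ξ j ω = i} = ENNReal.ofReal ((1 - q) * q ^ i))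
    (v : ℕ → ℝ) (hv : Monotone v)
    (n : ℕ) (u : Fin n → ℝ) (a : ℝ) :
    (P.map (fun ω (j : ℕ) => v (shuffleSeq (fun t => ξ t ω) j)))
        {w : ℕ → ℝ | (∀ m : Fin n, w (m : ℕ) = u m) ∧ w n = a} =
      (P.map (fun ω (j : ℕ) => v (shuffleSeq (fun t => ξ t ω) j)))
          {w : ℕ → ℝ | ∀ m : Fin n, w (m : ℕ) = u m} *
        ENNReal.ofReal
          (qpowE q ({j : ℕ | v j < a}.encard -
              ((Finset.univ.filter (fun m : Fin n => u m < a)).card : ℕ∞)) -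
            qpowE q ({j : ℕ | v j ≤ a}.encard -
              ((Finset.univ.filter (fun m : Fin n => u m ≤ a)).card : ℕ∞))) := by
  have hword : Measurable fun ω (j : ℕ) => v (shuffleSeq (fun t => ξ t ω) j) :=
    measurable_pi_lambda _ fun j => .comp .of_discrete
      ((measurable_of_dependsOn (dependsOn_shuffleSeq j)).comp (measurable_pi_lambda _ hmeas))
  set E := {x : ℕ → ℕ | ∀ m : Fin n, v (shuffleSeq x m) = u m}
  have hE : DependsOn (· ∈ E) (Finset.range n : Set ℕ) := fun x y hxy => by
    have hm (m : Fin n) : shuffleSeq x m = shuffleSeq y m :=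
      (dependsOn_shuffleSeq m).mono (by simp [m.isLt]) hxy
    simp only [E, Set.mem_ofPred_eq, hm]
  have hpre : (fun ω (j : ℕ) => v (shuffleSeq (fun t => ξ t ω) j)) ⁻¹'
      {w : ℕ → ℝ | (∀ m : Fin n, w (m : ℕ) = u m) ∧ w n = a} =
      {ω | (fun t => ξ t ω) ∈ E} ∩ ξ n ⁻¹' {i |
        {j : ℕ | v j < a}.encard - (Finset.univ.filter (fun m : Fin n => u m < a)).card ≤ i ∧
          (i : ℕ∞) < {j : ℕ | v j ≤ a}.encard -
            (Finset.univ.filter (fun m : Fin n => u m ≤ a)).card} := by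
    ext ω
    exact and_congr_right (shuffleSeq_eq_iff hv · a)
  rw [Measure.map_apply hword (by measurability), Measure.map_apply hword (by measurability), hpre,
    hindep.measure_inter_preimage_eq_mul_of_dependsOn hmeas hE (by simp)]
  exact congrArg _ (measure_window_of_geometric hq0.le hq1.le (hmeas n) (hgeom n) _ _)

/-- transition probabilities of the law `P^{(v)}` of the infinite `q`-shuffle
of a weakly increasing word `v`:
`P^{(v)}(w_1 = u_1, …, w_n = u_n, w_{n+1} = a)
  = P^{(v)}(w_1 = u_1, …, w_n = u_n) · (q^{Σ_{b<a}(l_b - μ_b(u))} - q^{Σ_{b≤a}(l_b - μ_b(u))})`,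
where `l_b = #{j : v_j = b}`, `μ_b(u) = #{m : u_m = b}` (so that, with `b` running over the
support of `v`, `Σ_{b<a}(l_b - μ_b(u)) = #{j : v_j < a} - #{m : u_m < a}` and similarly for
`≤`), with the convention `q^∞ = 0`. -/
theorem stmt_19 (q : ℝ) (hq0 : 0 < q) (hq1 : q < 1)
    (Ω : Type*) [MeasurableSpace Ω] (P : Measure Ω) [IsProbabilityMeasure P]
    (ξ : ℕ → Ω → ℕ) (hmeas : ∀ j, Measurable (ξ j))
    (hindep : iIndepFun ξ P)
    (hgeom : ∀ j i : ℕ, P {ω | ξ j ω = i} = ENNReal.ofReal ((1 - q) * q ^ i))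
    (v : ℕ → ℝ) (hv : Monotone v)
    (n : ℕ) (u : Fin n → ℝ) (hu : ∀ m : Fin n, u m ∈ Set.range v) (a : ℝ)
    (ha : a ∈ Set.range v)
    (hμl : ∀ b : ℝ, ((Finset.univ.filter (fun m : Fin n => u m = b)).card : ℕ∞) ≤
      {j : ℕ | v j = b}.encard) :
    (P.map (fun ω (j : ℕ) => v (shuffleSeq (fun t => ξ t ω) j)))
        {w : ℕ → ℝ | (∀ m : Fin n, w (m : ℕ) = u m) ∧ w n = a} =
      (P.map (fun ω (j : ℕ) => v (shuffleSeq (fun t => ξ t ω) j)))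
          {w : ℕ → ℝ | ∀ m : Fin n, w (m : ℕ) = u m} *
        ENNReal.ofReal
          (qpowE q ({j : ℕ | v j < a}.encard -
              ((Finset.univ.filter (fun m : Fin n => u m < a)).card : ℕ∞)) -
            qpowE q ({j : ℕ | v j ≤ a}.encard -
              ((Finset.univ.filter (fun m : Fin n => u m ≤ a)).card : ℕ∞))) :=
  stmt_19_general q hq0 hq1 Ω P ξ hmeas hindep hgeom v hv n u a
end
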